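/- arXiv:1504.02636 — 2 statements merged into one kernel-verified Lean document; each statement's English description precedes it below -/
import Mathlib

section
/- Let a ≤ 0, R > 0, θ ∈ (0,1), and suppose (1-θ)R² ≥ -a(n - min(a+2, 0)). Then the function Λ(x) = (R² + |x|²)^{-a/2} on ℝⁿ satisfies Λ(x) - ΔΛ(x) ≥ θ Λ(x) for all x ∈ ℝⁿ. -/
/-!
Write `S = R² + ‖x‖²` and `p = -a/2`. Since `Λ = S ^ p` depends on `x` only through `‖x‖²`,
`ΔΛ = S ^ (p - 2) * (-a * n * S + a * (a + 2) * ‖x‖²)`. The term `a * (a + 2) * ‖x‖²` is at most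
`a * min (a + 2) 0 * S` (it is `≤ 0` when `a + 2 ≥ 0`, and `‖x‖² ≤ S` otherwise), so the bracket is
at most `-a * (n - min (a + 2) 0) * S ≤ (1 - θ) * R² * S ≤ (1 - θ) * S²`, i.e. `ΔΛ ≤ (1 - θ) * Λ`.
-/

/-- The Laplacian of a real-valued function on `EuclideanSpace ℝ (Fin n)`,
as the sum of second partial derivatives in the coordinate directions. -/
noncomputable def lap {n : ℕ} (f : EuclideanSpace ℝ (Fin n) → ℝ)
    (x : EuclideanSpace ℝ (Fin n)) : ℝ :=
  ∑ i : Fin n, fderiv ℝ (fun y => fderiv ℝ f y (EuclideanSpace.single i 1)) x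
    (EuclideanSpace.single i 1)

open EuclideanSpace

section RadialLaplacian

variable {n : ℕ} {g g' : ℝ → ℝ}

theorem hasFDerivAt_comp_norm_sq {d : ℝ} {y : EuclideanSpace ℝ (Fin n)}
    (hg : HasDerivAt g d (‖y‖ ^ 2)) :
    HasFDerivAt (fun z : EuclideanSpace ℝ (Fin n) => g (‖z‖ ^ 2)) (d • 2 • innerSL ℝ y) y :=
  hg.comp_hasFDerivAt y (hasStrictFDerivAt_norm_sq y).hasFDerivAt

theorem fderiv_comp_norm_sq_single (hg : ∀ y : EuclideanSpace ℝ (Fin n),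
      HasDerivAt g (g' (‖y‖ ^ 2)) (‖y‖ ^ 2))
    (y : EuclideanSpace ℝ (Fin n)) (i : Fin n) :
    fderiv ℝ (fun z : EuclideanSpace ℝ (Fin n) => g (‖z‖ ^ 2)) y (single i 1)
      = 2 * g' (‖y‖ ^ 2) * y i := by
  rw [(hasFDerivAt_comp_norm_sq (hg y)).fderiv]
  simp only [smul_apply, coe_innerSL_apply, inner_single_right, Real.ringHom_apply, one_mul,
    nsmul_eq_mul, Nat.cast_ofNat, smul_eq_mul]
  ring

theorem lap_comp_norm_sq {g'' : ℝ} (hg : ∀ y : EuclideanSpace ℝ (Fin n),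
      HasDerivAt g (g' (‖y‖ ^ 2)) (‖y‖ ^ 2))
    {x : EuclideanSpace ℝ (Fin n)} (hg' : HasDerivAt g' g'' (‖x‖ ^ 2)) :
    lap (fun y => g (‖y‖ ^ 2)) x = 2 * n * g' (‖x‖ ^ 2) + 4 * g'' * ‖x‖ ^ 2 := by
  have hpartial : ∀ i : Fin n, HasFDerivAt
      (fun y : EuclideanSpace ℝ (Fin n) => 2 * g' (‖y‖ ^ 2) * y i)
      ((2 : ℝ) • (g' (‖x‖ ^ 2) • proj i + x i • g'' • 2 • innerSL ℝ x)) x := fun i =>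
    ((hasFDerivAt_comp_norm_sq hg').mul (proj i : EuclideanSpace ℝ (Fin n) →L[ℝ] ℝ).hasFDerivAt)
      |>.const_mul 2 |>.congr_of_eventuallyEq (.of_forall fun y => by simp only [mul_assoc, coe_proj, Pi.mul_apply])
  unfold lap
  simp only [fderiv_comp_norm_sq_single hg, (hpartial _).fderiv]
  simp only [smul_add, add_apply, smul_apply, PiLp.proj_apply, PiLp.single_eq_same, smul_eq_mul,
    mul_one, coe_innerSL_apply, inner_single_right, Real.ringHom_apply, one_mul, nsmul_eq_mul,
    Nat.cast_ofNat]
  have hsum : ∑ i, 2 * (x i * (g'' * (2 * x i))) = 4 * g'' * ‖x‖ ^ 2 := by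
    rw [real_norm_sq_eq, Finset.mul_sum]
    exact Finset.sum_congr rfl fun i _ => by ring
  rw [Finset.sum_add_distrib, hsum, Finset.sum_const, Finset.card_univ, Fintype.card_fin,
    nsmul_eq_mul]
  ring

theorem lap_rpow_const_add_norm_sq {c : ℝ} (hc : 0 < c) (p : ℝ) (x : EuclideanSpace ℝ (Fin n)) :
    lap (fun y => (c + ‖y‖ ^ 2) ^ p) x
      = 2 * p * n * (c + ‖x‖ ^ 2) ^ (p - 1)
        + 4 * p * (p - 1) * (c + ‖x‖ ^ 2) ^ (p - 2) * ‖x‖ ^ 2 := by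
  have hderiv : ∀ (q s : ℝ), 0 ≤ s → HasDerivAt (fun s => (c + s) ^ q) (q * (c + s) ^ (q - 1)) s :=
    fun q s hs => (Real.hasDerivAt_rpow_const (Or.inl (by positivity))).comp s
      ((hasDerivAt_id s).const_add c) |>.congr_deriv (by simp)
  rw [lap_comp_norm_sq (g := fun s => (c + s) ^ p) (fun y => hderiv p _ (by positivity))
    ((hderiv (p - 1) _ (by positivity)).const_mul p)]
  rw [show p - 1 - 1 = p - 2 by ring]
  ring

end RadialLaplacian

theorem neg_mul_mul_add_mul_mul_le_mul_sq {a m c t θ : ℝ} (ha : a ≤ 0) (hc : 0 ≤ c) (ht : 0 ≤ t)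
    (hθ : θ ≤ 1) (hcond : -a * (m - min (a + 2) 0) ≤ (1 - θ) * c) :
    -a * m * (c + t) + a * (a + 2) * t ≤ (1 - θ) * (c + t) ^ 2 := by
  have hS : 0 ≤ c + t := by positivity
  have hcross : a * (a + 2) * t ≤ a * min (a + 2) 0 * (c + t) := by
    rcases le_total 0 (a + 2) with h | h
    · rw [min_eq_right h, mul_zero, zero_mul]
      exact mul_nonpos_of_nonpos_of_nonneg (mul_nonpos_of_nonpos_of_nonneg ha h) ht
    · rw [min_eq_left h]
      exact mul_le_mul_of_nonneg_left (by linarith) (mul_nonneg_of_nonpos_of_nonpos ha h)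
  calc -a * m * (c + t) + a * (a + 2) * t
      ≤ -a * (m - min (a + 2) 0) * (c + t) := by linarith
    _ ≤ (1 - θ) * c * (c + t) := mul_le_mul_of_nonneg_right hcond hS
    _ ≤ (1 - θ) * (c + t) ^ 2 := by
        rw [sq, ← mul_assoc]
        exact mul_le_mul_of_nonneg_right
          (mul_le_mul_of_nonneg_left (by linarith) (by linarith)) hS

theorem lap_rpow_neg_half_le {n : ℕ} {a c θ : ℝ} (ha : a ≤ 0) (hc : 0 < c) (hθ : θ ≤ 1)
    (hcond : -a * (n - min (a + 2) 0) ≤ (1 - θ) * c) (x : EuclideanSpace ℝ (Fin n)) :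
    lap (fun y => (c + ‖y‖ ^ 2) ^ (-a / 2)) x ≤ (1 - θ) * (c + ‖x‖ ^ 2) ^ (-a / 2) := by
  set S := c + ‖x‖ ^ 2
  have hS : 0 < S := by positivity
  have hp1 : S ^ (-a / 2 - 1) = S * S ^ (-a / 2 - 2) := by
    rw [show -a / 2 - 1 = 1 + (-a / 2 - 2) by ring, Real.rpow_add hS, Real.rpow_one]
  have hp0 : S ^ (-a / 2) = S ^ 2 * S ^ (-a / 2 - 2) := by
    rw [← Real.rpow_two, ← Real.rpow_add hS]
    ring_nf
  have hQ : 0 ≤ S ^ (-a / 2 - 2) := by positivity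
  rw [lap_rpow_const_add_norm_sq hc, hp1, hp0]
  calc 2 * (-a / 2) * n * (S * S ^ (-a / 2 - 2))
        + 4 * (-a / 2) * (-a / 2 - 1) * S ^ (-a / 2 - 2) * ‖x‖ ^ 2
      = S ^ (-a / 2 - 2) * (-a * n * S + a * (a + 2) * ‖x‖ ^ 2) := by ring
    _ ≤ S ^ (-a / 2 - 2) * ((1 - θ) * S ^ 2) := mul_le_mul_of_nonneg_left
        (neg_mul_mul_add_mul_mul_le_mul_sq ha hc.le (by positivity) hθ hcond) hQ
    _ = (1 - θ) * (S ^ 2 * S ^ (-a / 2 - 2)) := by ring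

theorem stmt4_general (n : ℕ) (a R θ : ℝ) (ha : a ≤ 0) (hR : 0 < R)
    (hθ1 : θ < 1)
    (hcond : -a * (n - min (a + 2) 0) ≤ (1 - θ) * R ^ (2:ℕ)) :
    ∀ x : EuclideanSpace ℝ (Fin n),
      θ * (R ^ (2:ℕ) + ‖x‖ ^ (2:ℕ)) ^ (-a/2) ≤
        (R ^ (2:ℕ) + ‖x‖ ^ (2:ℕ)) ^ (-a/2)
          - lap (fun y => (R ^ (2:ℕ) + ‖y‖ ^ (2:ℕ)) ^ (-a/2)) x := by
  intro x
  have := lap_rpow_neg_half_le ha (by positivity) hθ1.le hcond x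
  linarith

theorem stmt4 (n : ℕ) (hn : 1 ≤ n) (a R θ : ℝ) (ha : a ≤ 0) (hR : 0 < R)
    (hθ0 : 0 < θ) (hθ1 : θ < 1)
    (hcond : -a * (n - min (a + 2) 0) ≤ (1 - θ) * R ^ (2:ℕ)) :
    ∀ x : EuclideanSpace ℝ (Fin n),
      θ * (R ^ (2:ℕ) + ‖x‖ ^ (2:ℕ)) ^ (-a/2) ≤
        (R ^ (2:ℕ) + ‖x‖ ^ (2:ℕ)) ^ (-a/2)
          - lap (fun y => (R ^ (2:ℕ) + ‖y‖ ^ (2:ℕ)) ^ (-a/2)) x :=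
  stmt4_general n a R θ ha hR hθ1 hcond
end

section
/- Let 0 < p < 1 and let Λ : [0,∞) → ℝ be continuous and positive. Define Λ₁(t) = ∫₀ᵗ Λ(τ)dτ and recursively Λ_m(t) = ∫₀ᵗ Λ(τ) Λ_{m-1}(τ)^p dτ for m ≥ 2. Then for each m ≥ 1, Λ_m(t) = Λ₁(t)^{K_m} / L_m where K_m = 1 + p + ⋯ + p^{m-1} and L_m = ∏_{k=1}^{m-1} (1 + p + ⋯ + p^k)^{p^{m-1-k}}; moreover, L_m ≤ q^{K_{m-1}} with q = 1/(1-p), and hence Λ_m(t) ≥ (1-p)^{K_{m-1}} Λ₁(t)^{K_m} for all t ≥ 0. -/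
theorem stmt18 (p : ℝ) (hp0 : 0 < p) (hp1 : p < 1)
    (Λ : ℝ → ℝ) (hΛc : Continuous Λ) (hΛpos : ∀ t ≥ (0:ℝ), 0 < Λ t)
    (Λseq : ℕ → ℝ → ℝ)
    (h1 : ∀ t, Λseq 1 t = ∫ τ in (0:ℝ)..t, Λ τ)
    (hrec : ∀ m ≥ 2, ∀ t, Λseq m t = ∫ τ in (0:ℝ)..t, Λ τ * (Λseq (m-1) τ) ^ p) :
    ∀ m ≥ 1, ∀ t ≥ (0:ℝ),
      Λseq m t = (Λseq 1 t) ^ (∑ i ∈ Finset.range m, p ^ i) /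
          (∏ k ∈ Finset.Icc 1 (m-1),
            (∑ j ∈ Finset.range (k+1), p ^ j) ^ (p ^ (m - 1 - k))) ∧
      (1 - p) ^ (∑ i ∈ Finset.range (m-1), p ^ i) *
          (Λseq 1 t) ^ (∑ i ∈ Finset.range m, p ^ i) ≤ Λseq m t := by
  set F : ℝ → ℝ := fun t => ∫ τ in (0:ℝ)..t, Λ τ with hFdef
  set K : ℕ → ℝ := fun m => ∑ i ∈ Finset.range m, p ^ i with hKdef
  set L : ℕ → ℝ := fun m => ∏ k ∈ Finset.Icc 1 (m-1),
      (K (k+1)) ^ (p ^ (m - 1 - k)) with hLdef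
  have h1p : (0:ℝ) < 1 - p := by linarith
  have hFd : ∀ x : ℝ, HasDerivAt F (Λ x) x := fun x =>
    (hΛc.integral_hasStrictDerivAt 0 x).hasDerivAt
  have hFc : Continuous F :=
    continuous_iff_continuousAt.2 fun x => (hFd x).continuousAt
  have hFnn : ∀ t ≥ (0:ℝ), 0 ≤ F t := fun t ht =>
    intervalIntegral.integral_nonneg ht (fun τ hτ => (hΛpos τ hτ.1).le)
  have hF0 : F 0 = 0 := intervalIntegral.integral_same
  have hKpos : ∀ m, 1 ≤ m → 0 < K m := by
    intro m hm
    exact Finset.sum_pos (fun i _ => pow_pos hp0 i)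
      (Finset.nonempty_range_iff.2 (by omega))
  have hKle : ∀ m, K m ≤ 1 / (1 - p) := by
    intro m
    rw [hKdef]
    simp only
    rw [geom_sum_eq (by linarith : p ≠ (1:ℝ)), le_div_iff₀ h1p]
    have hne : p - 1 ≠ 0 := by linarith
    have h : (p ^ m - 1) / (p - 1) * (1 - p) = 1 - p ^ m := by
      field_simp
      ring
    rw [h]
    have : 0 ≤ p ^ m := pow_nonneg hp0.le m
    linarith
  have hLpos : ∀ m, 0 < L m := by
    intro m
    exact Finset.prod_pos fun k hk =>
      Real.rpow_pos_of_pos (hKpos (k+1) (by omega)) _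
  -- key FTC computation
  have key : ∀ a : ℝ, 0 < a → ∀ t ≥ (0:ℝ),
      (∫ τ in (0:ℝ)..t, Λ τ * (F τ) ^ a) = (F t) ^ (a + 1) / (a + 1) := by
    intro a ha t ht
    have ha1 : a + 1 ≠ 0 := by linarith
    have hderiv : ∀ x ∈ Set.uIcc (0:ℝ) t,
        HasDerivAt (fun τ => F τ ^ (a+1) / (a+1)) (Λ x * F x ^ a) x := by
      intro x _
      have hd1 : HasDerivAt (fun y : ℝ => y ^ (a+1)) ((a+1) * F x ^ (a+1-1)) (F x) :=
        Real.hasDerivAt_rpow_const (Or.inr (by linarith))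
      have hd2 := (hd1.comp x (hFd x)).div_const (a+1)
      have : a + 1 - 1 = a := by ring
      rw [this] at hd2
      have e : Λ x * F x ^ a = (a + 1) * F x ^ a * Λ x / (a + 1) := by
        rw [eq_div_iff ha1]
        ring
      rw [e]
      exact hd2
    have hint : IntervalIntegrable (fun τ => Λ τ * F τ ^ a) MeasureTheory.volume 0 t := by
      apply Continuous.intervalIntegrable
      apply hΛc.mul
      exact (continuous_iff_continuousAt.2 fun x =>
        Real.continuousAt_rpow_const x a (Or.inr ha.le)).comp hFc
    rw [intervalIntegral.integral_eq_sub_of_hasDerivAt hderiv hint, hF0,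
      Real.zero_rpow ha1]
    simp
  -- K recursion
  have hKsucc : ∀ m : ℕ, K (m+1) = K m * p + 1 := by
    intro m
    rw [hKdef]
    simp only
    rw [geom_sum_succ]
    ring
  -- L recursion
  have hLrec : ∀ m : ℕ, 1 ≤ m → L (m+1) = K (m+1) * (L m) ^ p := by
    intro m hm
    obtain ⟨n, rfl⟩ : ∃ n, m = n + 1 := ⟨m - 1, by omega⟩
    have hprod : (L (n+1)) ^ p
        = ∏ k ∈ Finset.Icc 1 n, (K (k+1)) ^ (p ^ (n + 1 - k)) := by
      rw [hLdef]
      simp only [Nat.add_sub_cancel]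
      rw [← Real.finset_prod_rpow _ _
        (fun k _ => (Real.rpow_pos_of_pos (hKpos (k+1) (by omega)) _).le)]
      apply Finset.prod_congr rfl
      intro k hk
      rw [← Real.rpow_mul (hKpos (k+1) (by omega)).le, ← pow_succ]
      congr 2
      simp only [Finset.mem_Icc] at hk
      omega
    have e1 : L (n+2) = (∏ k ∈ Finset.Icc 1 n, (K (k+1)) ^ (p ^ (n + 1 - k))) * K (n+2) := by
      have hn : n + 2 - 1 = n + 1 := by omega
      rw [hLdef]
      simp only [hn]
      rw [Finset.prod_Icc_succ_top (by omega : 1 ≤ n + 1)]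
      simp only [Nat.sub_self, pow_zero, Real.rpow_one]
    rw [e1, ← hprod]
    ring
  -- main equality by induction
  have hmain : ∀ m, 1 ≤ m → ∀ t, 0 ≤ t → Λseq m t = F t ^ K m / L m := by
    intro m hm
    induction m, hm using Nat.le_induction with
    | base =>
      intro t ht
      have : K 1 = 1 := by rw [hKdef]; simp
      have hL1 : L 1 = 1 := by rw [hLdef]; simp
      rw [this, hL1, Real.rpow_one, div_one]
      exact h1 t
    | succ m hm ih =>
      intro t ht
      have hrw : Λseq (m+1) t = ∫ τ in (0:ℝ)..t,
          (Λ τ * F τ ^ (K m * p)) / (L m) ^ p := by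
        rw [hrec (m+1) (by omega) t]
        simp only [Nat.add_sub_cancel]
        apply intervalIntegral.integral_congr
        intro τ hτ
        rw [Set.uIcc_of_le ht] at hτ
        simp only
        rw [ih τ hτ.1, Real.div_rpow (Real.rpow_nonneg (hFnn τ hτ.1) _) (hLpos m).le,
          ← Real.rpow_mul (hFnn τ hτ.1), mul_div_assoc]
      rw [hrw, intervalIntegral.integral_div,
        key (K m * p) (mul_pos (hKpos m hm) hp0) t ht,
        div_div, hKsucc m, hLrec m hm, hKsucc m]
  -- sum reindexing for the bound
  have hsum : ∀ n : ℕ, ∑ k ∈ Finset.Icc 1 n, (p:ℝ) ^ (n - k) = K n := by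
    intro n
    rw [hKdef]
    simp only
    rw [← Finset.Ico_add_one_right_eq_Icc, Finset.sum_Ico_eq_sum_range,
      ← Finset.sum_range_reflect (fun i => p ^ i) n]
    try simp only [Nat.add_sub_cancel]
    apply Finset.sum_congr rfl
    intro i hi
    congr 1
    omega
  -- bound on L
  have hbound : ∀ m, 1 ≤ m → (1 - p) ^ (K (m-1)) * L m ≤ 1 := by
    intro m hm
    have hLle : L m ≤ (1 / (1 - p)) ^ (K (m-1)) := by
      have h2 : L m ≤ ∏ k ∈ Finset.Icc 1 (m-1), (1/(1-p)) ^ (p ^ (m - 1 - k)) := by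
        rw [hLdef]
        apply Finset.prod_le_prod
        · intro k _
          exact (Real.rpow_pos_of_pos (hKpos (k+1) (by omega)) _).le
        · intro k _
          exact Real.rpow_le_rpow (hKpos (k+1) (by omega)).le (hKle (k+1))
            (pow_nonneg hp0.le _)
      have h3 : ∏ k ∈ Finset.Icc 1 (m-1), ((1:ℝ)/(1-p)) ^ (p ^ (m - 1 - k))
          = (1/(1-p)) ^ (K (m-1)) := by
        rw [← Real.rpow_sum_of_pos (by positivity : (0:ℝ) < 1/(1-p)), hsum]
      rw [h3] at h2
      exact h2
    calc (1 - p) ^ (K (m-1)) * L m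
        ≤ (1 - p) ^ (K (m-1)) * (1 / (1 - p)) ^ (K (m-1)) := by
          exact mul_le_mul_of_nonneg_left hLle (Real.rpow_nonneg h1p.le _)
      _ = 1 := by
          rw [← Real.mul_rpow h1p.le (by positivity)]
          rw [mul_one_div, div_self (ne_of_gt h1p), Real.one_rpow]
  -- conclude
  intro m hm t ht
  have heq : Λseq m t = F t ^ K m / L m := hmain m hm t ht
  have hFt : Λseq 1 t = F t := h1 t
  constructor
  · rw [hFt]
    exact heq
  · rw [hFt, heq]
    show (1 - p) ^ (K (m-1)) * F t ^ K m ≤ F t ^ K m / L m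
    rw [le_div_iff₀ (hLpos m)]
    have hx : 0 ≤ F t ^ K m := Real.rpow_nonneg (hFnn t ht) _
    calc (1 - p) ^ (K (m-1)) * F t ^ K m * L m
        = ((1 - p) ^ (K (m-1)) * L m) * (F t ^ K m) := by ring
      _ ≤ 1 * F t ^ K m := mul_le_mul_of_nonneg_right (hbound m hm) hx
      _ = F t ^ K m := one_mul _
end
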